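/- Low-frequency expansion of the vectorial single layer potential: let x ∈ ℝ³ and let φ : ℝ³ → ℂ³ be such that the functions y ↦ ‖φ(y)‖/|x−y|, y ↦ ‖φ(y)‖ and y ↦ |x−y|²‖φ(y)‖ are all σ-integrable on ∂D = ∂B₁ ∪ ∂B₂ (in particular this holds when x ∉ ∂D and φ is bounded). Then for every k ≥ 0, ‖A_D^k[φ](x) − ∫_{∂D} (−1/(4π|x−y|))·φ(y) dσ(y) − k·∫_{∂D} (−i/(4π))·φ(y) dσ(y) − k²·∫_{∂D} (|x−y|/(8π))·φ(y) dσ(y)‖ ≤ (k³/(24π))·∫_{∂D} |x−y|²·‖φ(y)‖ dσ(y); i.e. A_D^k[φ](x) = Á_D^0[φ](x) + Á_D^1[φ](x)·k + Á_D^2[φ](x)·k² + O(k³) as k → 0⁺. -/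

import Mathlib

/-!
Writing `t = |x - y|`, the three subtracted kernels are `-1/(4πt)` times the Taylor terms
`1 + ikt - (kt)²/2` of `e^{ikt}`, so the pointwise kernel error is
`|e^{iθ} - 1 - iθ + θ²/2| / (4πt)` with `θ = kt`. Integrating `|e^{is} - 1| ≤ s` twice bounds the
numerator by `θ³/6`, giving the pointwise bound `k³t²/(24π)`; integrating it against `‖φ‖` is the
claim. The surface measure enters only through `t > 0` almost everywhere, which holds because
`μH[2]` has no atoms.
-/

open MeasureTheory

/-- The fundamental outgoing solution `Γ^k(z) = -e^{ik|z|}/(4π|z|)`. -/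
noncomputable def helmholtzFundamental (k : ℝ) (z : EuclideanSpace ℝ (Fin 3)) : ℂ :=
  -(Complex.exp (Complex.I * k * ‖z‖) / (4 * Real.pi * ‖z‖))

/-- Center of the first ball: `c₁ = (-r - ε/2, 0, 0)`. -/
noncomputable def ctr1 (r ε : ℝ) : EuclideanSpace ℝ (Fin 3) :=
  (WithLp.equiv 2 (Fin 3 → ℝ)).symm ![-r - ε / 2, 0, 0]

/-- Center of the second ball: `c₂ = (r + ε/2, 0, 0)`. -/
noncomputable def ctr2 (r ε : ℝ) : EuclideanSpace ℝ (Fin 3) :=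
  (WithLp.equiv 2 (Fin 3 → ℝ)).symm ![r + ε / 2, 0, 0]

open Complex Real

theorem norm_le_of_norm_deriv_le_deriv {E : Type*} [NormedAddCommGroup E] [NormedSpace ℝ E]
    {f f' : ℝ → E} {B B' : ℝ → ℝ} {θ : ℝ} (hθ : 0 ≤ θ)
    (hf : ∀ s, HasDerivAt f (f' s) s) (hB : ∀ s, HasDerivAt B (B' s) s)
    (h0 : ‖f 0‖ ≤ B 0) (bound : ∀ s, 0 ≤ s → ‖f' s‖ ≤ B' s) : ‖f θ‖ ≤ B θ :=
  image_norm_le_of_norm_deriv_right_le_deriv_boundary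
    (fun s _ => (hf s).continuousAt.continuousWithinAt) (fun s _ => (hf s).hasDerivWithinAt)
    h0 hB (fun s hs => bound s hs.1) ⟨hθ, le_rfl⟩

theorem hasDerivAt_I_mul_ofReal (s : ℝ) : HasDerivAt (fun s : ℝ => I * s) I s := by
  simpa using (hasDerivAt_id s).ofReal_comp.const_mul I

theorem hasDerivAt_exp_I_mul_ofReal (s : ℝ) :
    HasDerivAt (fun s : ℝ => exp (I * s)) (I * exp (I * s)) s := by
  simpa [mul_comm] using (hasDerivAt_I_mul_ofReal s).cexp

theorem norm_exp_I_mul_sub_one_sub_I_mul_le {θ : ℝ} (hθ : 0 ≤ θ) :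
    ‖exp (I * θ) - 1 - I * θ‖ ≤ θ ^ 2 / 2 := by
  refine norm_le_of_norm_deriv_le_deriv (f := fun s : ℝ => exp (I * s) - 1 - I * s)
    (f' := fun s => I * (exp (I * s) - 1)) (B := fun s => s ^ 2 / 2) (B' := id) hθ
    (fun s => ?_) (fun s => ?_) (by simp) (fun s hs => ?_)
  · convert ((hasDerivAt_exp_I_mul_ofReal s).sub_const 1).fun_sub (hasDerivAt_I_mul_ofReal s)
      using 1
    ring
  · simpa using (hasDerivAt_pow 2 s).div_const 2
  · simpa [abs_of_nonneg hs] using Real.norm_exp_I_mul_ofReal_sub_one_le (x := s)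

theorem norm_exp_I_mul_sub_one_sub_I_mul_add_sq_div_two_le {θ : ℝ} (hθ : 0 ≤ θ) :
    ‖exp (I * θ) - 1 - I * θ + θ ^ 2 / 2‖ ≤ θ ^ 3 / 6 := by
  refine norm_le_of_norm_deriv_le_deriv (f := fun s : ℝ => exp (I * s) - 1 - I * s + s ^ 2 / 2)
    (f' := fun s => I * (exp (I * s) - 1 - I * s)) (B := fun s => s ^ 3 / 6)
    (B' := fun s => s ^ 2 / 2) hθ (fun s => ?_) (fun s => ?_) (by simp) (fun s hs => ?_)
  · convert (((hasDerivAt_exp_I_mul_ofReal s).sub_const 1).fun_sub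
      (hasDerivAt_I_mul_ofReal s)).fun_add
      (((hasDerivAt_pow 2 (s : ℂ)).div_const 2).comp_ofReal) using 1
    ring_nf; simp [I_sq]
  · exact ((hasDerivAt_pow 3 s).div_const 6).congr_deriv (by ring)
  · simpa using norm_exp_I_mul_sub_one_sub_I_mul_le hs

/-- `helmholtzFundamental k z` unfolds to `helmholtzProfile k ‖z‖`. -/
noncomputable def helmholtzProfile (k t : ℝ) : ℂ :=
  -(exp (I * k * t) / (4 * π * t))

theorem measurable_helmholtzProfile (k : ℝ) : Measurable (helmholtzProfile k) := by
  unfold helmholtzProfile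
  fun_prop

theorem norm_helmholtzProfile (k : ℝ) {t : ℝ} (ht : 0 ≤ t) :
    ‖helmholtzProfile k t‖ = 1 / (4 * π * t) := by
  rw [helmholtzProfile, norm_neg, norm_div,
    show I * k * t = ((k * t : ℝ) : ℂ) * I by push_cast; ring, norm_exp_ofReal_mul_I,
    show (4 * π * t : ℂ) = ((4 * π * t : ℝ) : ℂ) by push_cast; ring, norm_real,
    norm_of_nonneg (by positivity)]

theorem helmholtzProfile_ne_zero (k : ℝ) {t : ℝ} (ht : 0 < t) : helmholtzProfile k t ≠ 0 := by
  rw [← norm_ne_zero_iff, norm_helmholtzProfile k ht.le]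
  positivity

theorem norm_helmholtzProfile_sub_expansion_le {k t : ℝ} (hk : 0 ≤ k) (ht : 0 < t) :
    ‖helmholtzProfile k t - ((-(1 / (4 * π * t)) : ℝ) : ℂ) - k * (-I / (4 * π))
        - (k : ℂ) ^ 2 * ((t / (8 * π) : ℝ) : ℂ)‖ ≤ k ^ 3 / (24 * π) * t ^ 2 := by
  have hπ := pi_pos
  have hdiv : helmholtzProfile k t - ((-(1 / (4 * π * t)) : ℝ) : ℂ)
        - k * (-I / (4 * π)) - (k : ℂ) ^ 2 * ((t / (8 * π) : ℝ) : ℂ)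
      = -((exp (I * (k * t : ℝ)) - 1 - I * (k * t : ℝ) + (k * t : ℝ) ^ 2 / 2)
          / ((4 * π * t : ℝ) : ℂ)) := by
    have hπ0 : (π : ℂ) ≠ 0 := ofReal_ne_zero.2 hπ.ne'
    have ht0 : (t : ℂ) ≠ 0 := ofReal_ne_zero.2 ht.ne'
    rw [helmholtzProfile]
    push_cast
    field_simp
    ring
  rw [hdiv, norm_neg, norm_div, norm_real, norm_of_nonneg (by positivity),
    div_le_iff₀ (by positivity)]
  calc _ ≤ (k * t) ^ 3 / 6 := norm_exp_I_mul_sub_one_sub_I_mul_add_sq_div_two_le (by positivity)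
    _ = _ := by field_simp; ring

theorem integral_smul_eq_zero_of_not_aestronglyMeasurable {α 𝕜 E : Type*} [MeasurableSpace α]
    {μ : Measure α} [NontriviallyNormedField 𝕜] [NormedAddCommGroup E] [NormedSpace ℝ E]
    [NormedSpace 𝕜 E] {c : α → 𝕜} {φ : α → E} (hc : AEStronglyMeasurable c μ)
    (hc0 : ∀ᵐ y ∂μ, c y ≠ 0) (hφ : ¬AEStronglyMeasurable φ μ) : ∫ y, c y • φ y ∂μ = 0 :=
  integral_non_aestronglyMeasurable fun h => hφ ((aestronglyMeasurable_smul_iff₀ hc hc0).1 h)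

section

variable {α F : Type*} [MeasurableSpace α] {μ : Measure α} [NormedAddCommGroup F]
  [NormedSpace ℂ F] {t : α → ℝ} {φ : α → F}

theorem integrable_helmholtzProfile_smul (k : ℝ) (ht : Measurable t) (ht0 : ∀ᵐ y ∂μ, 0 < t y)
    (hφ : AEStronglyMeasurable φ μ) (h1 : Integrable (fun y => ‖φ y‖ / t y) μ) :
    Integrable (fun y => helmholtzProfile k (t y) • φ y) μ := by
  refine (h1.const_mul (1 / (4 * π))).mono'
    (((measurable_helmholtzProfile k).comp ht).aestronglyMeasurable.smul hφ) ?_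
  filter_upwards [ht0] with y hy
  rw [norm_smul, norm_helmholtzProfile k hy.le]
  apply le_of_eq
  field_simp

theorem integrable_inv_smul (ht : Measurable t) (ht0 : ∀ᵐ y ∂μ, 0 < t y)
    (hφ : AEStronglyMeasurable φ μ) (h1 : Integrable (fun y => ‖φ y‖ / t y) μ) :
    Integrable (fun y => (-(1 / (4 * π * t y)) : ℝ) • φ y) μ := by
  refine (h1.const_mul (1 / (4 * π))).mono' ((by fun_prop : Measurable fun y =>
    (-(1 / (4 * π * t y)) : ℝ)).aestronglyMeasurable.smul hφ) ?_
  filter_upwards [ht0] with y hy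
  rw [norm_smul, norm_neg, norm_of_nonneg (by positivity)]
  apply le_of_eq
  field_simp

theorem integrable_div_smul (ht : Measurable t) (ht0 : ∀ᵐ y ∂μ, 0 < t y)
    (hφ : AEStronglyMeasurable φ μ) (h2 : Integrable (fun y => ‖φ y‖) μ)
    (h3 : Integrable (fun y => t y ^ 2 * ‖φ y‖) μ) :
    Integrable (fun y => (t y / (8 * π) : ℝ) • φ y) μ := by
  refine ((h2.add h3).const_mul (1 / (16 * π))).mono'
    ((by fun_prop : Measurable fun y => t y / (8 * π)).aestronglyMeasurable.smul hφ) ?_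
  filter_upwards [ht0] with y hy
  rw [norm_smul, norm_of_nonneg (by positivity), Pi.add_apply]
  -- `2 t ≤ 1 + t²`
  have := mul_nonneg (sq_nonneg (t y - 1)) (norm_nonneg (φ y))
  rw [div_mul_eq_mul_div, div_le_iff₀ (by positivity)]
  field_simp
  nlinarith

theorem integral_helmholtzProfile_sub_expansion_eq {k : ℝ}
    (h0 : Integrable (fun y => helmholtzProfile k (t y) • φ y) μ)
    (h1 : Integrable (fun y => (-(1 / (4 * π * t y)) : ℝ) • φ y) μ) (h2 : Integrable φ μ)
    (h3 : Integrable (fun y => (t y / (8 * π) : ℝ) • φ y) μ) :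
    (∫ y, helmholtzProfile k (t y) • φ y ∂μ)
      - (∫ y, (-(1 / (4 * π * t y)) : ℝ) • φ y ∂μ)
      - k • (∫ y, (-I / (4 * π)) • φ y ∂μ)
      - k ^ 2 • (∫ y, (t y / (8 * π) : ℝ) • φ y ∂μ)
      = ∫ y, (helmholtzProfile k (t y) - ((-(1 / (4 * π * t y)) : ℝ) : ℂ)
          - k * (-I / (4 * π)) - (k : ℂ) ^ 2 * ((t y / (8 * π) : ℝ) : ℂ)) • φ y ∂μ := by
  have h01 : Integrable (fun y => helmholtzProfile k (t y) • φ y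
      - (-(1 / (4 * π * t y)) : ℝ) • φ y) μ := h0.sub h1
  have h2' : Integrable (fun y => k • ((-I / (4 * π)) • φ y)) μ := (h2.smul _).smul k
  have h012 : Integrable (fun y => helmholtzProfile k (t y) • φ y
      - (-(1 / (4 * π * t y)) : ℝ) • φ y - k • ((-I / (4 * π)) • φ y)) μ := h01.sub h2'
  have h3' : Integrable (fun y => k ^ 2 • ((t y / (8 * π) : ℝ) • φ y)) μ := h3.smul _
  rw [← integral_smul, ← integral_smul, ← integral_sub h0 h1, ← integral_sub h01 h2',
    ← integral_sub h012 h3']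
  refine integral_congr_ae (ae_of_all _ fun y => ?_)
  simp only [sub_smul, ← Complex.coe_smul, smul_smul, ofReal_pow]

theorem norm_integral_helmholtzProfile_sub_expansion_le (ht : Measurable t)
    (ht0 : ∀ᵐ y ∂μ, 0 < t y) (h1 : Integrable (fun y => ‖φ y‖ / t y) μ)
    (h2 : Integrable (fun y => ‖φ y‖) μ) (h3 : Integrable (fun y => t y ^ 2 * ‖φ y‖) μ) {k : ℝ}
    (hk : 0 ≤ k) :
    ‖(∫ y, helmholtzProfile k (t y) • φ y ∂μ)
      - (∫ y, (-(1 / (4 * π * t y)) : ℝ) • φ y ∂μ)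
      - k • (∫ y, (-I / (4 * π)) • φ y ∂μ)
      - k ^ 2 • (∫ y, (t y / (8 * π) : ℝ) • φ y ∂μ)‖
    ≤ k ^ 3 / (24 * π) * ∫ y, t y ^ 2 * ‖φ y‖ ∂μ := by
  by_cases hφ : AEStronglyMeasurable φ μ
  swap
  · -- every integral is the junk value `0`
    rw [integral_smul_eq_zero_of_not_aestronglyMeasurable (c := fun y => helmholtzProfile k (t y))
        ((measurable_helmholtzProfile k).comp ht).aestronglyMeasurable
        (ht0.mono fun y hy => helmholtzProfile_ne_zero k hy) hφ,
      integral_smul_eq_zero_of_not_aestronglyMeasurable (c := fun y => (-(1 / (4 * π * t y)) : ℝ))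
        (by fun_prop : Measurable _).aestronglyMeasurable
        (ht0.mono fun y hy => neg_ne_zero.2 (by positivity)) hφ,
      integral_smul_eq_zero_of_not_aestronglyMeasurable aestronglyMeasurable_const
        (ae_of_all _ fun _ => by simp [pi_ne_zero]) hφ,
      integral_smul_eq_zero_of_not_aestronglyMeasurable (c := fun y => (t y / (8 * π) : ℝ))
        (by fun_prop : Measurable _).aestronglyMeasurable
        (ht0.mono fun y hy => by positivity) hφ]
    simp only [smul_zero, sub_zero, norm_zero]
    exact mul_nonneg (by positivity) (integral_nonneg fun y => by positivity)
  rw [integral_helmholtzProfile_sub_expansion_eq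
    (integrable_helmholtzProfile_smul k ht ht0 hφ h1) (integrable_inv_smul ht ht0 hφ h1)
    ((integrable_norm_iff hφ).1 h2) (integrable_div_smul ht ht0 hφ h2 h3)]
  calc
    _ ≤ ∫ y, k ^ 3 / (24 * π) * (t y ^ 2 * ‖φ y‖) ∂μ := by
      refine norm_integral_le_of_norm_le (h3.const_mul _) ?_
      filter_upwards [ht0] with y hy
      rw [norm_smul, ← mul_assoc]
      exact mul_le_mul_of_nonneg_right (norm_helmholtzProfile_sub_expansion_le hk hy)
        (norm_nonneg _)
    _ = _ := integral_const_mul _ _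

end

theorem stmt_14_general (r ε : ℝ)
    (x : EuclideanSpace ℝ (Fin 3))
    (φ : EuclideanSpace ℝ (Fin 3) → EuclideanSpace ℂ (Fin 3))
    (h1 : IntegrableOn (fun y => ‖φ y‖ / ‖x - y‖)
      (Metric.sphere (ctr1 r ε) r ∪ Metric.sphere (ctr2 r ε) r) μH[2])
    (h2 : IntegrableOn (fun y => ‖φ y‖)
      (Metric.sphere (ctr1 r ε) r ∪ Metric.sphere (ctr2 r ε) r) μH[2])
    (h3 : IntegrableOn (fun y => ‖x - y‖ ^ 2 * ‖φ y‖)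
      (Metric.sphere (ctr1 r ε) r ∪ Metric.sphere (ctr2 r ε) r) μH[2]) :
    ∀ k : ℝ, 0 ≤ k →
      ‖(∫ y in Metric.sphere (ctr1 r ε) r ∪ Metric.sphere (ctr2 r ε) r,
            helmholtzFundamental k (x - y) • φ y ∂μH[2])
          - (∫ y in Metric.sphere (ctr1 r ε) r ∪ Metric.sphere (ctr2 r ε) r,
              (-(1 / (4 * Real.pi * ‖x - y‖)) : ℝ) • φ y ∂μH[2])
          - k • (∫ y in Metric.sphere (ctr1 r ε) r ∪ Metric.sphere (ctr2 r ε) r,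
              (-Complex.I / (4 * Real.pi)) • φ y ∂μH[2])
          - k ^ 2 • (∫ y in Metric.sphere (ctr1 r ε) r ∪ Metric.sphere (ctr2 r ε) r,
              (‖x - y‖ / (8 * Real.pi) : ℝ) • φ y ∂μH[2])‖
        ≤ (k ^ 3 / (24 * Real.pi)) *
            ∫ y in Metric.sphere (ctr1 r ε) r ∪ Metric.sphere (ctr2 r ε) r,
              ‖x - y‖ ^ 2 * ‖φ y‖ ∂μH[2] := by
  intro k hk
  have := Measure.nullSingletonClass_hausdorff (EuclideanSpace ℝ (Fin 3)) two_pos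
  have hx : ∀ᵐ y ∂(μH[2].restrict (Metric.sphere (ctr1 r ε) r ∪ Metric.sphere (ctr2 r ε) r)),
      0 < ‖x - y‖ := by
    filter_upwards [Measure.ae_ne _ x] with y hy
    exact norm_pos_iff.2 (sub_ne_zero.2 hy.symm)
  exact norm_integral_helmholtzProfile_sub_expansion_le (by fun_prop) hx h1 h2 h3 hk

/-- Low-frequency expansion of the vectorial single layer potential:
`A_D^k[φ](x) = Á_D^0[φ](x) + Á_D^1[φ](x)·k + Á_D^2[φ](x)·k² + O(k³)` with explicit
remainder bound `(k³/(24π))·∫_{∂D} |x-y|²‖φ(y)‖ dσ(y)`. -/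
theorem stmt_14 (r ε : ℝ) (hr : 0 < r) (hε : 0 < ε)
    (x : EuclideanSpace ℝ (Fin 3))
    (φ : EuclideanSpace ℝ (Fin 3) → EuclideanSpace ℂ (Fin 3))
    (h1 : IntegrableOn (fun y => ‖φ y‖ / ‖x - y‖)
      (Metric.sphere (ctr1 r ε) r ∪ Metric.sphere (ctr2 r ε) r) μH[2])
    (h2 : IntegrableOn (fun y => ‖φ y‖)
      (Metric.sphere (ctr1 r ε) r ∪ Metric.sphere (ctr2 r ε) r) μH[2])
    (h3 : IntegrableOn (fun y => ‖x - y‖ ^ 2 * ‖φ y‖)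
      (Metric.sphere (ctr1 r ε) r ∪ Metric.sphere (ctr2 r ε) r) μH[2]) :
    ∀ k : ℝ, 0 ≤ k →
      ‖(∫ y in Metric.sphere (ctr1 r ε) r ∪ Metric.sphere (ctr2 r ε) r,
            helmholtzFundamental k (x - y) • φ y ∂μH[2])
          - (∫ y in Metric.sphere (ctr1 r ε) r ∪ Metric.sphere (ctr2 r ε) r,
              (-(1 / (4 * Real.pi * ‖x - y‖)) : ℝ) • φ y ∂μH[2])
          - k • (∫ y in Metric.sphere (ctr1 r ε) r ∪ Metric.sphere (ctr2 r ε) r,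
              (-Complex.I / (4 * Real.pi)) • φ y ∂μH[2])
          - k ^ 2 • (∫ y in Metric.sphere (ctr1 r ε) r ∪ Metric.sphere (ctr2 r ε) r,
              (‖x - y‖ / (8 * Real.pi) : ℝ) • φ y ∂μH[2])‖
        ≤ (k ^ 3 / (24 * Real.pi)) *
            ∫ y in Metric.sphere (ctr1 r ε) r ∪ Metric.sphere (ctr2 r ε) r,
              ‖x - y‖ ^ 2 * ‖φ y‖ ∂μH[2] :=
  stmt_14_general r ε x φ h1 h2 h3
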